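/- Fix an integer k ≥ 0 and let C^k(ℝ) be the set of k-times continuously differentiable functions ℝ → ℝ, viewed as a differential structure on ℝ. Then every parametrisation in ΠC^k(ℝ) is locally constant, and hence (ℝ, C^k(ℝ)) is not reflexive. -/

import Mathlib

/-- A parametrisation of `X`: a map from (an open subset `U` of) `ℝⁿ` to `X`.
Only the values on `U` matter. -/
structure Param (X : Type*) where
  n : ℕ
  U : Set (Fin n → ℝ)
  hU : IsOpen U
  toFun : (Fin n → ℝ) → X

/-- `Φ D`: real-valued functions whose composition with each parametrisation in `D`
is infinitely differentiable. -/
def Phi {X : Type*} (D : Set (Param X)) : Set (X → ℝ) :=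
  {f | ∀ p ∈ D, ContDiffOn ℝ (⊤ : ℕ∞) (f ∘ p.toFun) p.U}

/-- `Π F`: parametrisations whose composition with each function in `F`
is infinitely differentiable. -/
def PiOp {X : Type*} (F : Set (X → ℝ)) : Set (Param X) :=
  {p | ∀ f ∈ F, ContDiffOn ℝ (⊤ : ℕ∞) (f ∘ p.toFun) p.U}


noncomputable section
open Filter Set Topology

private def fk (k : ℕ) : ℝ → ℝ := fun x => |x| * x ^ k

private lemma hasDerivAt_fk (k : ℕ) (x : ℝ) :
    HasDerivAt (fk (k + 1)) (((k : ℝ) + 2) * fk k x) x := by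
  rcases lt_trichotomy x 0 with hx | hx | hx
  · have hev : (fun z : ℝ => -(z ^ (k + 2))) =ᶠ[𝓝 x] fk (k + 1) := by
      filter_upwards [eventually_lt_nhds hx] with z hz
      simp [fk, abs_of_neg hz, pow_succ]
      ring
    have := ((hasDerivAt_pow (k + 2) x).neg).congr_of_eventuallyEq hev.symm
    convert this using 1
    rotate_left 2
    simp [fk, abs_of_neg hx, pow_succ]
    ring_nf
    exact Or.inl trivial
    exacts [rfl, rfl]
  · subst hx
    rw [hasDerivAt_iff_tendsto_slope]
    have h0 : ((k:ℝ) + 2) * fk k 0 = 0 := by simp [fk]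
    rw [h0]
    have hc : Tendsto (fun z : ℝ => |z| * z ^ k) (𝓝[≠] 0) (𝓝 0) := by
      have : Tendsto (fun z : ℝ => |z| * z ^ k) (𝓝 0) (𝓝 (|(0:ℝ)| * 0 ^ k)) :=
        (continuous_abs.mul (continuous_pow k)).tendsto 0
      simpa using this.mono_left nhdsWithin_le_nhds
    refine hc.congr' ?_
    filter_upwards [self_mem_nhdsWithin] with z (hz : z ≠ 0)
    simp [slope_def_field, fk, pow_succ]
    field_simp
  · have hev : (fun z : ℝ => z ^ (k + 2)) =ᶠ[𝓝 x] fk (k + 1) := by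
      filter_upwards [eventually_gt_nhds hx] with z hz
      simp [fk, abs_of_pos hz, pow_succ]
      ring
    have := (hasDerivAt_pow (k + 2) x).congr_of_eventuallyEq hev.symm
    convert this using 1
    rotate_left 2
    simp [fk, abs_of_pos hx, pow_succ]
    ring_nf
    exact Or.inl trivial
    exacts [rfl, rfl]

private lemma deriv_fk (k : ℕ) : deriv (fk (k + 1)) = fun x => ((k : ℝ) + 2) * fk k x := by
  funext x
  exact (hasDerivAt_fk k x).deriv

private lemma contDiff_fk (k : ℕ) : ContDiff ℝ (k : ℕ∞) (fk k) := by
  induction k with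
  | zero =>
      rw [show ((0 : ℕ) : ℕ∞) = 0 by rfl]
      exact contDiff_zero.2 (continuous_abs.mul (continuous_pow 0))
  | succ k ih =>
      have hcast : (((k + 1 : ℕ) : ℕ∞) : WithTop ℕ∞) = ((k : ℕ∞) : WithTop ℕ∞) + 1 := by
        push_cast; rfl
      rw [hcast, contDiff_succ_iff_deriv]
      refine ⟨fun x => (hasDerivAt_fk k x).differentiableAt, ?_, ?_⟩
      · intro h; simp at h
      · rw [deriv_fk]
        exact contDiff_const.mul ih

private lemma contDiffAt_deriv_of {f : ℝ → ℝ} {x : ℝ}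
    (hf : ContDiffAt ℝ ((⊤ : ℕ∞) : WithTop ℕ∞) f x) :
    ContDiffAt ℝ ((⊤ : ℕ∞) : WithTop ℕ∞) (deriv f) x := by
  have h1 : ContDiffAt ℝ ((⊤ : ℕ∞) : WithTop ℕ∞) (fderiv ℝ f) x :=
    hf.fderiv_right (le_of_eq rfl)
  have h2 : ContDiffAt ℝ ((⊤ : ℕ∞) : WithTop ℕ∞)
      (fun y => (ContinuousLinearMap.apply ℝ ℝ (1 : ℝ)) (fderiv ℝ f y)) x :=
    (ContinuousLinearMap.apply ℝ ℝ (1 : ℝ)).contDiff.contDiffAt.comp x h1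
  have : deriv f = fun y => (ContinuousLinearMap.apply ℝ ℝ (1 : ℝ)) (fderiv ℝ f y) := by
    funext y; exact (fderiv_apply_one_eq_deriv).symm
  rw [this]
  exact h2

private lemma not_contDiffAt_fk (k : ℕ) :
    ¬ ContDiffAt ℝ ((⊤ : ℕ∞) : WithTop ℕ∞) (fk k) 0 := by
  induction k with
  | zero =>
      intro h
      have hd : DifferentiableAt ℝ (fk 0) 0 := h.differentiableAt (by simp)
      have : fk 0 = abs := by funext x; simp [fk]
      rw [this] at hd
      exact not_differentiableAt_abs_zero hd
  | succ k ih =>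
      intro h
      have hd := contDiffAt_deriv_of h
      rw [deriv_fk] at hd
      have : ContDiffAt ℝ ((⊤ : ℕ∞) : WithTop ℕ∞) (fk k) 0 := by
        have h2 := hd.const_smul (((k : ℝ) + 2)⁻¹)
        have he : (fun y => ((k : ℝ) + 2)⁻¹ • (((k : ℝ) + 2) * fk k y)) = fk k := by
          funext y
          have hne : ((k : ℝ) + 2) ≠ 0 := by positivity
          simp [smul_eq_mul]
          field_simp
        rwa [he] at h2
      exact ih this

private lemma fderiv_zero_of_PiOp (k : ℕ) (p : Param ℝ)
    (hp : p ∈ PiOp {f : ℝ → ℝ | ContDiff ℝ (k : ℕ∞) f}) {u : Fin p.n → ℝ} (hu : u ∈ p.U) :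
    fderiv ℝ p.toFun u = 0 := by
  have hn1 : ((⊤ : ℕ∞) : WithTop ℕ∞) ≠ 0 := by simp
  -- p is smooth on U
  have hps : ContDiffOn ℝ ((⊤ : ℕ∞) : WithTop ℕ∞) p.toFun p.U := by
    have := hp (id : ℝ → ℝ) (show ContDiff ℝ (k : ℕ∞) (id : ℝ → ℝ) from contDiff_id)
    exact this.of_le (by simp)
  have hpa : ContDiffAt ℝ ((⊤ : ℕ∞) : WithTop ℕ∞) p.toFun u :=
    hps.contDiffAt (p.hU.mem_nhds hu)
  ext v
  by_contra hc
  simp only [ContinuousLinearMap.zero_apply] at hc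
  set c := fderiv ℝ p.toFun u v with hcdef
  -- the curve γ
  set γ : ℝ → (Fin p.n → ℝ) := fun t => u + t • v with hγdef
  have hγ0 : γ 0 = u := by simp [hγdef]
  have hγ : ContDiff ℝ ((⊤ : ℕ∞) : WithTop ℕ∞) γ :=
    contDiff_const.add (contDiff_id.smul contDiff_const)
  set h : ℝ → ℝ := p.toFun ∘ γ with hhdef
  have hh : ContDiffAt ℝ ((⊤ : ℕ∞) : WithTop ℕ∞) h 0 := by
    refine ContDiffAt.comp 0 ?_ hγ.contDiffAt
    rw [hγ0]; exact hpa
  have hγ' : HasDerivAt γ v 0 := by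
    have : HasDerivAt (fun t : ℝ => t • v) ((1 : ℝ) • v) 0 := (hasDerivAt_id 0).smul_const v
    simpa [hγdef] using this.const_add u
  have hder : HasDerivAt h c 0 := by
    have hpd : HasFDerivAt p.toFun (fderiv ℝ p.toFun u) (γ 0) := by
      rw [hγ0]
      exact (hpa.differentiableAt hn1).hasFDerivAt
    exact hpd.comp_hasDerivAt 0 hγ'
  have hfd : HasFDerivAt h
      (ContinuousLinearEquiv.unitsEquivAut ℝ (Units.mk0 c hc) : ℝ →L[ℝ] ℝ) 0 :=
    hder.hasFDerivAt_equiv hc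
  -- smooth local inverse
  set g : ℝ → ℝ := hh.localInverse hfd hn1 with hgdef
  have hg : ContDiffAt ℝ ((⊤ : ℕ∞) : WithTop ℕ∞) g (h 0) := hh.to_localInverse hfd hn1
  have hg0 : g (h 0) = 0 := hh.localInverse_apply_image hfd hn1
  have hright : ∀ᶠ y in 𝓝 (h 0), h (g y) = y :=
    (hh.hasStrictFDerivAt' hfd hn1).eventually_right_inverse
  -- every C^k function is smooth at h 0
  have key : ∀ f : ℝ → ℝ, ContDiff ℝ (k : ℕ∞) f →
      ContDiffAt ℝ ((⊤ : ℕ∞) : WithTop ℕ∞) f (h 0) := by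
    intro f hf
    have hfh : ContDiffAt ℝ ((⊤ : ℕ∞) : WithTop ℕ∞) (f ∘ h) 0 := by
      have h1 : ContDiffAt ℝ ((⊤ : ℕ∞) : WithTop ℕ∞) (f ∘ p.toFun) u :=
        ((hp f hf).of_le (by simp)).contDiffAt (p.hU.mem_nhds hu)
      have : ContDiffAt ℝ ((⊤ : ℕ∞) : WithTop ℕ∞) ((f ∘ p.toFun) ∘ γ) 0 := by
        refine ContDiffAt.comp 0 ?_ hγ.contDiffAt
        rw [hγ0]; exact h1
      exact this
    have hcomp : ContDiffAt ℝ ((⊤ : ℕ∞) : WithTop ℕ∞) ((f ∘ h) ∘ g) (h 0) := by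
      refine ContDiffAt.comp (h 0) ?_ hg
      rw [hg0]; exact hfh
    refine hcomp.congr_of_eventuallyEq ?_
    filter_upwards [hright] with y hy
    simp [Function.comp, hy]
  -- contradiction with fk k shifted
  have hfknot := not_contDiffAt_fk k
  set a := h 0 with hadef
  have hfs : ContDiff ℝ (k : ℕ∞) (fun x : ℝ => fk k (x - a)) :=
    (contDiff_fk k).comp (contDiff_id.sub contDiff_const)
  have h1 := key _ hfs
  have h2 : ContDiffAt ℝ ((⊤ : ℕ∞) : WithTop ℕ∞) (fk k) 0 := by
    have h3 : ContDiffAt ℝ ((⊤ : ℕ∞) : WithTop ℕ∞)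
        ((fun x : ℝ => fk k (x - a)) ∘ (fun x : ℝ => x + a)) 0 := by
      refine ContDiffAt.comp 0 ?_ (contDiff_id.add contDiff_const).contDiffAt
      simpa using h1
    have : ((fun x : ℝ => fk k (x - a)) ∘ (fun x : ℝ => x + a)) = fk k := by
      funext x; simp
    rwa [this] at h3
  exact hfknot h2

theorem Ck_not_reflexive (k : ℕ) :
    (∀ p ∈ PiOp {f : ℝ → ℝ | ContDiff ℝ (k : ℕ∞) f}, ∀ u ∈ p.U,
      ∃ V : Set (Fin p.n → ℝ), IsOpen V ∧ u ∈ V ∧ V ⊆ p.U ∧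
        ∀ v ∈ V, p.toFun v = p.toFun u) ∧
    Phi (PiOp {f : ℝ → ℝ | ContDiff ℝ (k : ℕ∞) f}) ≠ {f : ℝ → ℝ | ContDiff ℝ (k : ℕ∞) f} := by
  have hn1 : (1 : WithTop ℕ∞) ≤ ((⊤ : ℕ∞) : WithTop ℕ∞) := by exact_mod_cast le_top
  have part1 : ∀ p ∈ PiOp {f : ℝ → ℝ | ContDiff ℝ (k : ℕ∞) f}, ∀ u ∈ p.U,
      ∃ V : Set (Fin p.n → ℝ), IsOpen V ∧ u ∈ V ∧ V ⊆ p.U ∧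
        ∀ v ∈ V, p.toFun v = p.toFun u := by
    intro p hp u hu
    obtain ⟨ε, hε, hball⟩ := Metric.isOpen_iff.1 p.hU u hu
    refine ⟨Metric.ball u ε, Metric.isOpen_ball, Metric.mem_ball_self hε, hball, ?_⟩
    intro v hv
    have hps : ContDiffOn ℝ ((⊤ : ℕ∞) : WithTop ℕ∞) p.toFun p.U := by
      have := hp (id : ℝ → ℝ) (show ContDiff ℝ (k : ℕ∞) (id : ℝ → ℝ) from contDiff_id)
      exact this.of_le (by simp)
    refine (convex_ball u ε).is_const_of_fderivWithin_eq_zero (𝕜 := ℝ)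
      (f := p.toFun) ?_ ?_ hv (Metric.mem_ball_self hε)
    · intro x hx
      exact ((hps.contDiffAt (p.hU.mem_nhds (hball hx))).differentiableAt
        (by simp)).differentiableWithinAt
    · intro x hx
      rw [fderivWithin_of_isOpen Metric.isOpen_ball hx]
      exact fderiv_zero_of_PiOp k p hp (hball hx)
  refine ⟨part1, ?_⟩
  intro heq
  set g : ℝ → ℝ := fun x => if x = 0 then 1 else 0 with hgdef
  have hgPhi : g ∈ Phi (PiOp {f : ℝ → ℝ | ContDiff ℝ (k : ℕ∞) f}) := by
    intro p hp
    intro u hu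
    obtain ⟨V, hVopen, huV, hVU, hconst⟩ := part1 p hp u hu
    have hev : (g ∘ p.toFun) =ᶠ[𝓝 u] fun _ => g (p.toFun u) := by
      filter_upwards [hVopen.mem_nhds huV] with v hv
      simp [Function.comp, hconst v hv]
    exact ((contDiffAt_const (c := g (p.toFun u))).congr_of_eventuallyEq hev).contDiffWithinAt
  rw [heq] at hgPhi
  have hgc : Continuous g := (show ContDiff ℝ (k : ℕ∞) g from hgPhi).continuous
  have h1 : Tendsto g (𝓝[≠] (0 : ℝ)) (𝓝 1) := by
    have := hgc.continuousAt (x := (0 : ℝ))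
    have h0 : g 0 = 1 := by simp [hgdef]
    rw [ContinuousAt, h0] at this
    exact this.mono_left nhdsWithin_le_nhds
  have h2 : Tendsto g (𝓝[≠] (0 : ℝ)) (𝓝 0) := by
    refine tendsto_const_nhds.congr' ?_
    filter_upwards [self_mem_nhdsWithin] with z (hz : z ≠ 0)
    simp [hgdef, hz]
  exact one_ne_zero (tendsto_nhds_unique h1 h2)

end
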